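/- Composition of a pattern substitution with its inverse is the identity: if s = a₁^{f₁}…a_p^{f_p}.↑ⁿ is a pattern substitution, then s ∘ s⁻¹ = id, i.e., for every i with 1 ≤ i ≤ p, applying s⁻¹ to a_i yields i^{f_i}. -/

import Mathlib

namespace LinUnif

/-- Linearity flags on variables/terms. -/
inductive Flag | I | A | L
deriving DecidableEq

/-- Context linearity flags: intuitionistic, affine, used affine, linear, used linear. -/
inductive CFlag | i | a | ua | l | ul
deriving DecidableEq

/-- Types of the linear/affine λ-calculus. -/
inductive Ty
  | base (n : ℕ)
  | withT (A B : Ty)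
  | lolli (A B : Ty)
  | affarr (A B : Ty)
  | arr (A B : Ty)
deriving DecidableEq

/-- Contexts: lists of types tagged with context linearity flags (head = de Bruijn index 1). -/
abbrev Ctx := List (Ty × CFlag)

def flagC : Flag → CFlag | .I => .i | .A => .a | .L => .l
def cToF : CFlag → Flag | .i => .I | .a => .A | .ua => .A | .l => .L | .ul => .L

/-- No linear (L) assumptions occur. -/
def NoLin (Γ : Ctx) : Prop := ∀ e ∈ Γ, e.2 ≠ CFlag.l

/-- The intuitionistic part of a context: L ↦ UL, A ↦ UA. -/
def bar (Γ : Ctx) : Ctx :=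
  Γ.map fun e => (e.1, match e.2 with | .l => CFlag.ul | .a => CFlag.ua | c => c)

/-- Context splitting Γ = Γ₁ ⋈ Γ₂. -/
inductive Split : Ctx → Ctx → Ctx → Prop
  | nil : Split [] [] []
  | int {Γ Γ₁ Γ₂ A} : Split Γ Γ₁ Γ₂ → Split ((A,.i)::Γ) ((A,.i)::Γ₁) ((A,.i)::Γ₂)
  | ulin {Γ Γ₁ Γ₂ A} : Split Γ Γ₁ Γ₂ → Split ((A,.ul)::Γ) ((A,.ul)::Γ₁) ((A,.ul)::Γ₂)
  | uaff {Γ Γ₁ Γ₂ A} : Split Γ Γ₁ Γ₂ → Split ((A,.ua)::Γ) ((A,.ua)::Γ₁) ((A,.ua)::Γ₂)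
  | linl {Γ Γ₁ Γ₂ A} : Split Γ Γ₁ Γ₂ → Split ((A,.l)::Γ) ((A,.l)::Γ₁) ((A,.ul)::Γ₂)
  | linr {Γ Γ₁ Γ₂ A} : Split Γ Γ₁ Γ₂ → Split ((A,.l)::Γ) ((A,.ul)::Γ₁) ((A,.l)::Γ₂)
  | affl {Γ Γ₁ Γ₂ A} : Split Γ Γ₁ Γ₂ → Split ((A,.a)::Γ) ((A,.a)::Γ₁) ((A,.ua)::Γ₂)
  | affr {Γ Γ₁ Γ₂ A} : Split Γ Γ₁ Γ₂ → Split ((A,.a)::Γ) ((A,.ua)::Γ₁) ((A,.a)::Γ₂)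

/-- Affine weakening Γ ≻_aff Γ'. -/
def AffWeak (Γ Γ' : Ctx) : Prop := ∃ Γ'', Split Γ Γ'' Γ' ∧ NoLin Γ''

/-- Typing of variables (1-based de Bruijn indices): Γ ⊢ n^f ⇒ A. -/
inductive VarTy : Ctx → ℕ → Flag → Ty → Prop
  | here {Γ A f} : NoLin Γ → VarTy ((A, flagC f)::Γ) 1 f A
  | there {Γ B l n f A} : VarTy Γ n f A → l ≠ CFlag.l → VarTy ((B,l)::Γ) (n+1) f A

/-- Relaxed typing of variables Γ ⊢ᵢ n^f ⇒ A : all variables available,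
    disregarding linearity/affineness (usedness). -/
inductive VarTyR : Ctx → ℕ → Flag → Ty → Prop
  | here {Γ A l f} : cToF l = f → VarTyR ((A,l)::Γ) 1 f A
  | there {Γ B l n f A} : VarTyR Γ n f A → VarTyR ((B,l)::Γ) (n+1) f A

/-- Substitution entries: a de Bruijn index together with its variable flag f'
    and the extension flag f (the entry `n^{f'f}`). A full substitution is a
    list of entries followed by a shift `↑ⁿ`. -/
abbrev SubE := List (ℕ × Flag × Flag)

def shiftE (es : SubE) : SubE := es.map fun e => (e.1+1, e.2)

/-- Typing of substitutions (whose entries are variables): Γ ⊢ es.↑ⁿ : Γ'. -/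
inductive SubTy : Ctx → SubE → ℕ → Ctx → Prop
  | nil : SubTy [] [] 0 []
  | shift {Γ B l n Γ'} : SubTy Γ [] n Γ' → l ≠ CFlag.l → SubTy ((B,l)::Γ) [] (n+1) Γ'
  | consI {Γ m f' A es n Γ'} : VarTy (bar Γ) m f' A → SubTy Γ es n Γ' →
      SubTy Γ ((m,f',Flag.I)::es) n ((A,CFlag.i)::Γ')
  | consL {Γ Γ₁ Γ₂ m f' A es n Γ'} : Split Γ Γ₁ Γ₂ → VarTy Γ₁ m f' A → SubTy Γ₂ es n Γ' →
      SubTy Γ ((m,f',Flag.L)::es) n ((A,CFlag.l)::Γ')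
  | consA {Γ Γ₁ Γ₂ m f' A es n Γ'} : Split Γ Γ₁ Γ₂ → NoLin Γ₁ → VarTy Γ₁ m f' A →
      SubTy Γ₂ es n Γ' → SubTy Γ ((m,f',Flag.A)::es) n ((A,CFlag.a)::Γ')
  | consUL {Γ m f' A es n Γ'} : VarTyR Γ m f' A → SubTy Γ es n Γ' →
      SubTy Γ ((m,f',Flag.L)::es) n ((A,CFlag.ul)::Γ')
  | consUA {Γ m f' A es n Γ'} : VarTyR Γ m f' A → f' ≠ Flag.L → SubTy Γ es n Γ' →
      SubTy Γ ((m,f',Flag.A)::es) n ((A,CFlag.ua)::Γ')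

/-- Pattern substitution: distinct de Bruijn indices, no linear-changing extension. -/
def PatternSub (es : SubE) : Prop :=
  es.Pairwise (fun a b => a.1 ≠ b.1) ∧ ∀ e ∈ es, e.2.1 = e.2.2 ∧ 1 ≤ e.1

/-- Terms (canonical forms), with logic variables `lvar X es sh` under a
    substitution consisting of variable entries `es` and a trailing shift `sh`. -/
inductive Tm
  | var (n : ℕ) (f : Flag)
  | lvar (X : ℕ) (es : SubE) (sh : ℕ)
  | pair (M N : Tm)
  | fst (M : Tm)
  | snd (M : Tm)
  | lamL (M : Tm)
  | lamA (M : Tm)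
  | lamI (M : Tm)
  | appL (M N : Tm)
  | appA (M N : Tm)
  | appI (M N : Tm)
deriving DecidableEq

/-- Bidirectional typing of canonical terms, with assignments ΓX, AX of contexts
    and types to logic variables. -/
inductive HasTy (ΓX : ℕ → Ctx) (AX : ℕ → Ty) : Ctx → Tm → Ty → Prop
  | var {Γ n f A} : VarTy Γ n f A → HasTy ΓX AX Γ (.var n f) A
  | lvar {Γ es sh X} : SubTy Γ es sh (ΓX X) → HasTy ΓX AX Γ (.lvar X es sh) (AX X)
  | pair {Γ M N A B} : HasTy ΓX AX Γ M A → HasTy ΓX AX Γ N B →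
      HasTy ΓX AX Γ (.pair M N) (.withT A B)
  | fst {Γ M A B} : HasTy ΓX AX Γ M (.withT A B) → HasTy ΓX AX Γ (.fst M) A
  | snd {Γ M A B} : HasTy ΓX AX Γ M (.withT A B) → HasTy ΓX AX Γ (.snd M) B
  | lamL {Γ M A B} : HasTy ΓX AX ((A,CFlag.l)::Γ) M B → HasTy ΓX AX Γ (.lamL M) (.lolli A B)
  | lamA {Γ M A B} : HasTy ΓX AX ((A,CFlag.a)::Γ) M B → HasTy ΓX AX Γ (.lamA M) (.affarr A B)
  | lamI {Γ M A B} : HasTy ΓX AX ((A,CFlag.i)::Γ) M B → HasTy ΓX AX Γ (.lamI M) (.arr A B)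
  | appL {Γ Γ₁ Γ₂ M N A B} : Split Γ Γ₁ Γ₂ → HasTy ΓX AX Γ₁ M (.lolli A B) →
      HasTy ΓX AX Γ₂ N A → HasTy ΓX AX Γ (.appL M N) B
  | appA {Γ Γ₁ Γ₂ M N A B} : Split Γ Γ₁ Γ₂ → NoLin Γ₂ → HasTy ΓX AX Γ₁ M (.affarr A B) →
      HasTy ΓX AX Γ₂ N A → HasTy ΓX AX Γ (.appA M N) B
  | appI {Γ M N A B} : HasTy ΓX AX Γ M (.arr A B) → HasTy ΓX AX (bar Γ) N A →
      HasTy ΓX AX Γ (.appI M N) B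

/-- All logic-variable substitutions occurring in a term are pattern substitutions. -/
def PatternTm : Tm → Prop
  | .var _ _ => True
  | .lvar _ es _ => PatternSub es
  | .pair M N => PatternTm M ∧ PatternTm N
  | .fst M => PatternTm M
  | .snd M => PatternTm M
  | .lamL M => PatternTm M
  | .lamA M => PatternTm M
  | .lamI M => PatternTm M
  | .appL M N => PatternTm M ∧ PatternTm N
  | .appA M N => PatternTm M ∧ PatternTm N
  | .appI M N => PatternTm M ∧ PatternTm N

/-- Occurrence n ∈ M of a variable in a term (flexible occurrences included). -/
inductive Occurs : ℕ → Tm → Prop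
  | var {n f} : Occurs n (.var n f)
  | lvar {n X es sh e} : e ∈ es → e.1 = n → Occurs n (.lvar X es sh)
  | pairl {n M N} : Occurs n M → Occurs n (.pair M N)
  | pairr {n M N} : Occurs n N → Occurs n (.pair M N)
  | fst {n M} : Occurs n M → Occurs n (.fst M)
  | snd {n M} : Occurs n M → Occurs n (.snd M)
  | lamL {n M} : Occurs (n+1) M → Occurs n (.lamL M)
  | lamA {n M} : Occurs (n+1) M → Occurs n (.lamA M)
  | lamI {n M} : Occurs (n+1) M → Occurs n (.lamI M)
  | appLl {n M N} : Occurs n M → Occurs n (.appL M N)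
  | appLr {n M N} : Occurs n N → Occurs n (.appL M N)
  | appAl {n M N} : Occurs n M → Occurs n (.appA M N)
  | appAr {n M N} : Occurs n N → Occurs n (.appA M N)
  | appIl {n M N} : Occurs n M → Occurs n (.appI M N)
  | appIr {n M N} : Occurs n N → Occurs n (.appI M N)

/-- Rigid occurrence n ∈_rig M: occurrence not inside a logic variable. -/
inductive RigidOccurs : ℕ → Tm → Prop
  | var {n f} : RigidOccurs n (.var n f)
  | pairl {n M N} : RigidOccurs n M → RigidOccurs n (.pair M N)
  | pairr {n M N} : RigidOccurs n N → RigidOccurs n (.pair M N)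
  | fst {n M} : RigidOccurs n M → RigidOccurs n (.fst M)
  | snd {n M} : RigidOccurs n M → RigidOccurs n (.snd M)
  | lamL {n M} : RigidOccurs (n+1) M → RigidOccurs n (.lamL M)
  | lamA {n M} : RigidOccurs (n+1) M → RigidOccurs n (.lamA M)
  | lamI {n M} : RigidOccurs (n+1) M → RigidOccurs n (.lamI M)
  | appLl {n M N} : RigidOccurs n M → RigidOccurs n (.appL M N)
  | appLr {n M N} : RigidOccurs n N → RigidOccurs n (.appL M N)
  | appAl {n M N} : RigidOccurs n M → RigidOccurs n (.appA M N)
  | appAr {n M N} : RigidOccurs n N → RigidOccurs n (.appA M N)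
  | appIl {n M N} : RigidOccurs n M → RigidOccurs n (.appI M N)
  | appIr {n M N} : RigidOccurs n N → RigidOccurs n (.appI M N)

/-- Occurrence of a logic variable X in a term. -/
inductive HasLvar : ℕ → Tm → Prop
  | lvar {X es sh} : HasLvar X (.lvar X es sh)
  | pairl {X M N} : HasLvar X M → HasLvar X (.pair M N)
  | pairr {X M N} : HasLvar X N → HasLvar X (.pair M N)
  | fst {X M} : HasLvar X M → HasLvar X (.fst M)
  | snd {X M} : HasLvar X M → HasLvar X (.snd M)
  | lamL {X M} : HasLvar X M → HasLvar X (.lamL M)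
  | lamA {X M} : HasLvar X M → HasLvar X (.lamA M)
  | lamI {X M} : HasLvar X M → HasLvar X (.lamI M)
  | appLl {X M N} : HasLvar X M → HasLvar X (.appL M N)
  | appLr {X M N} : HasLvar X N → HasLvar X (.appL M N)
  | appAl {X M N} : HasLvar X M → HasLvar X (.appA M N)
  | appAr {X M N} : HasLvar X N → HasLvar X (.appA M N)
  | appIl {X M N} : HasLvar X M → HasLvar X (.appI M N)
  | appIr {X M N} : HasLvar X N → HasLvar X (.appI M N)

/-- Look up a (1-based) variable index in a substitution es.↑^sh,
    returning the new index and variable flag. -/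
def lookupE (es : SubE) (sh : ℕ) (n : ℕ) (f : Flag) : ℕ × Flag :=
  match es[n-1]? with
  | some e => (e.1, e.2.1)
  | none => (n - es.length + sh, f)

/-- Extend a substitution under a binder: 1^{ff}.(s ∘ ↑). -/
def extSub (es : SubE) (f : Flag) : SubE := (1, f, f) :: shiftE es

/-- Apply a substitution (of the variable-entry form) to a term. -/
def applySub (es : SubE) (sh : ℕ) : Tm → Tm
  | .var n f => .var (lookupE es sh n f).1 (lookupE es sh n f).2
  | .lvar X ts _ =>
      .lvar X (ts.map fun e => ((lookupE es sh e.1 e.2.1).1, (lookupE es sh e.1 e.2.1).2, e.2.2)) sh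
  | .pair M N => .pair (applySub es sh M) (applySub es sh N)
  | .fst M => .fst (applySub es sh M)
  | .snd M => .snd (applySub es sh M)
  | .lamL M => .lamL (applySub (extSub es .L) (sh+1) M)
  | .lamA M => .lamA (applySub (extSub es .A) (sh+1) M)
  | .lamI M => .lamI (applySub (extSub es .I) (sh+1) M)
  | .appL M N => .appL (applySub es sh M) (applySub es sh N)
  | .appA M N => .appA (applySub es sh M) (applySub es sh N)
  | .appI M N => .appI (applySub es sh M) (applySub es sh N)

/-- Instantiation [X ← N]M of a logic variable. -/
def inst (X : ℕ) (N : Tm) : Tm → Tm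
  | .var n f => .var n f
  | .lvar Y es sh => if Y = X then applySub es sh N else .lvar Y es sh
  | .pair M M' => .pair (inst X N M) (inst X N M')
  | .fst M => .fst (inst X N M)
  | .snd M => .snd (inst X N M)
  | .lamL M => .lamL (inst X N M)
  | .lamA M => .lamA (inst X N M)
  | .lamI M => .lamI (inst X N M)
  | .appL M M' => .appL (inst X N M) (inst X N M')
  | .appA M M' => .appA (inst X N M) (inst X N M')
  | .appI M M' => .appI (inst X N M) (inst X N M')


/-- Inverse of a pattern substitution, as a lookup function:
    `invLookup es j = some (i, f)` when the i-th entry of es (1-based) is j^{f}. -/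
def invLookup (es : SubE) (j : ℕ) : Option (ℕ × Flag) :=
  (es.zipIdx.find? (fun p => p.1.1 = j)).map (fun p => (p.2 + 1, p.1.2.1))

theorem _root_.List.find?_zipIdx_eq_of_pairwise_ne {α β : Type*} [DecidableEq β] (key : α → β)
    {l : List α} (hl : l.Pairwise fun a b => key a ≠ key b) (k : ℕ) {i : ℕ} (hi : i < l.length) :
    (l.zipIdx k).find? (fun p => key p.1 = key l[i]) = some (l[i], k + i) := by
  rw [List.find?_eq_some_iff_getElem]
  refine ⟨by simp, i, by simpa using hi, List.getElem_zipIdx _, fun j hj => ?_⟩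
  have hne : key l[j] ≠ key l[i] := List.pairwise_iff_getElem.1 hl j i (by omega) hi hj
  simpa using hne

theorem comp_inv_id_general (es : SubE)
    (hpat : PatternSub es) :
    ∀ (i : ℕ) (h : i < es.length),
      invLookup es (es.get ⟨i, h⟩).1 = some (i + 1, (es.get ⟨i, h⟩).2.1) := by
  intro i h
  have hfind := List.find?_zipIdx_eq_of_pairwise_ne Prod.fst hpat.1 0 h
  simp only [invLookup, List.get_eq_getElem, hfind, Option.map_some, zero_add]

/-- Composition of a pattern substitution with its inverse is the
    identity: applying s⁻¹ to the entry a_i of s yields i^{f_i}. -/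
theorem comp_inv_id (es : SubE) (n : ℕ)
    (hpat : PatternSub es) (hle : ∀ e ∈ es, e.1 ≤ n) :
    ∀ (i : ℕ) (h : i < es.length),
      invLookup es (es.get ⟨i, h⟩).1 = some (i + 1, (es.get ⟨i, h⟩).2.1) :=
  comp_inv_id_general es hpat

end LinUnif
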